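/- For every ω̂ ∈ D and every n ≥ 1, the Birkhoff sums of the roof function have the closed form S_n(ψ)(ω̂) = log( (q_{ν_n} + p_{ν_n}·x) / (2k₁ + x) ), where p_i = p_i(ω̂⁺), q_i = q_i(ω̂⁺) are the ECF convergent numerators and denominators of ω̂⁺, ν_n = ν_n(ω̂), k₁ = k₁(ω̂), and x = x(ω̂) := y₁(ω̂) − 2k₁(ω̂) ∈ (−1/3, 1] is the backward value of ω̂. -/

import Mathlib

open MeasureTheory Filter

noncomputable section

/-- The alphabet `Σ = ℕ₀ × ((ℕ × {±1}) ∖ {(1,-1)})`, as a subset of `ℕ × (ℕ × ℤ)`. -/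
def SigmaSymb : Set (ℕ × (ℕ × ℤ)) :=
  {s | 1 ≤ s.2.1 ∧ ((s.2.2 = 1 ∨ s.2.2 = -1) ∧ ¬(s.2.1 = 1 ∧ s.2.2 = -1))}

/-- The space `D = Σ^ℤ` of bi-infinite sequences of symbols. -/
def DSpace : Type := {ω : ℤ → ℕ × (ℕ × ℤ) // ∀ n, ω n ∈ SigmaSymb}

/-- `h`-component of the `n`-th symbol. -/
def hF (ω : DSpace) (n : ℤ) : ℕ := (ω.1 n).1

/-- `m`-component of the `n`-th symbol. -/
def mF (ω : DSpace) (n : ℤ) : ℕ := (ω.1 n).2.1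

/-- sign component of the `n`-th symbol. -/
def eF (ω : DSpace) (n : ℤ) : ℤ := (ω.1 n).2.2

/-- `ν_0 = 1`, `ν_n = ν_{n-1} + h_n + 1`, extended to all of `ℤ`. -/
def nuF (ω : DSpace) (n : ℤ) : ℤ :=
  if 0 ≤ n then 1 + ∑ j ∈ Finset.Icc 1 n.toNat, ((hF ω j : ℤ) + 1)
  else 1 - ∑ j ∈ Finset.range (-n).toNat, ((hF ω (-(j : ℤ)) : ℤ) + 1)

open Classical in
/-- Decoded digit `k_i(ω̂)`: symbol `σ_n` occupies digit indices `ν_{n-1}, …, ν_n - 1`,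
as `h_n` copies of `(1,-1)` followed by `(m_n, ε_n)`. -/
def kF (ω : DSpace) (i : ℤ) : ℕ :=
  if h : ∃ n : ℤ, nuF ω n - 1 = i then mF ω h.choose else 1

open Classical in
/-- Decoded digit `ξ_i(ω̂)`. -/
def xiF (ω : DSpace) (i : ℤ) : ℤ :=
  if h : ∃ n : ℤ, nuF ω n - 1 = i then eF ω h.choose else -1

/-- The finite backward continued fractions
`2k_i + ξ_{i-1}/(2k_{i-1} + ⋯ + ξ_{i-r}/(2k_{i-r}))`. -/
def backCF (k : ℤ → ℕ) (ξ : ℤ → ℤ) : ℕ → ℤ → ℝ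
  | 0, i => 2 * (k i : ℝ)
  | (r+1), i => 2 * (k i : ℝ) + (ξ (i-1) : ℝ) / backCF k ξ r (i-1)

/-- `y_i(ω̂)`, the limit of the finite backward continued fractions. -/
def yF (ω : DSpace) (i : ℤ) : ℝ :=
  limUnder atTop (fun r => backCF (kF ω) (xiF ω) r i)

/-- The roof function `ψ(ω̂) = ∑_{i=2}^{ν₁(ω̂)} log y_i(ω̂)`. -/
def psiF (ω : DSpace) : ℝ := ∑ i ∈ Finset.Icc (2:ℤ) (nuF ω 1), Real.log (yF ω i)

/-- The invertible left shift `R̂` on `D`. -/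
def shiftD (ω : DSpace) : DSpace := ⟨fun n => ω.1 (n+1), fun n => ω.2 (n+1)⟩

/-- Birkhoff sums `S_n(ψ)(ω̂) = ∑_{j=0}^{n-1} ψ(R̂^j ω̂)`. -/
def birkhoffPsi (ω : DSpace) (n : ℕ) : ℝ := ∑ j ∈ Finset.range n, psiF (shiftD^[j] ω)

/-- Numerators `p_n = 2 k_n p_{n-1} + ξ_{n-1} p_{n-2}`, `p_0 = 0`, `p_{-1} = 1`. -/
def cfP (k : ℕ → ℕ) (ξ : ℕ → ℤ) : ℕ → ℤ
  | 0 => 0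
  | 1 => ξ 0
  | (n+2) => 2 * (k (n+2) : ℤ) * cfP k ξ (n+1) + ξ (n+1) * cfP k ξ n

/-- Denominators `q_n = 2 k_n q_{n-1} + ξ_{n-1} q_{n-2}`, `q_0 = 1`, `q_{-1} = 0`. -/
def cfQ (k : ℕ → ℕ) (ξ : ℕ → ℤ) : ℕ → ℤ
  | 0 => 1
  | 1 => 2 * (k 1 : ℤ)
  | (n+2) => 2 * (k (n+2) : ℤ) * cfQ k ξ (n+1) + ξ (n+1) * cfQ k ξ n

/-- Forward digit sequence of `ω̂⁺`: digits with indices `≥ 1` (with convention `ξ_0 = 1`). -/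
def kPlus (ω : DSpace) (n : ℕ) : ℕ := kF ω (n : ℤ)

def xiPlus (ω : DSpace) (n : ℕ) : ℤ := if n = 0 then 1 else xiF ω (n : ℤ)

/-- The ECF convergent numerators `p_i(ω̂⁺)` of the forward point. -/
def pPlus (ω : DSpace) : ℕ → ℤ := cfP (kPlus ω) (xiPlus ω)

/-- The ECF convergent denominators `q_i(ω̂⁺)` of the forward point. -/
def qPlus (ω : DSpace) : ℕ → ℤ := cfQ (kPlus ω) (xiPlus ω)

/-- The `R`-denominators `q̂_n(ω̂⁺) = q_{ν_n}(ω̂⁺)` of the forward point. -/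
def qhatF (ω : DSpace) (n : ℕ) : ℤ :=
  if n = 0 then 1 else qPlus ω (nuF ω n).toNat

end

open Topology

/-!
The backward value `y_i` is `2 k_i` plus the even continued fraction of the reversed digits, so it
exists by the determinant identity for the ECF continuants `cfP`, `cfQ`: together with
`cfQ (n + 1) ≥ cfQ n + 1` it makes the differences of consecutive convergents telescope.
The limits satisfy `y_i = 2 k_i + ξ_{i-1} / y_{i-1}`, and feeding this into the continuant
recursion gives `q_{j+1} + p_{j+1} x = (q_j + p_j x) y_{j+1}`, hence `q_N + p_N x = y_1 ⋯ y_N`.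
Shifting `ω̂` by one symbol shifts its digit sequence by `ν₁ - 1`, so
`S_n ψ = ∑_{i=2}^{ν_n} log y_i = log ((q_{ν_n} + p_{ν_n} x) / y₁)`, and `y₁ = 2 k₁ + x`.
The bounds on `x = ξ₀ / y₀` come from `y_i > 1`.
-/

section Convergents

variable {k : ℕ → ℕ} {ξ : ℕ → ℤ}

theorem cfP_cfQ_determinant (k : ℕ → ℕ) (ξ : ℕ → ℤ) (n : ℕ) :
    cfP k ξ (n + 1) * cfQ k ξ n - cfP k ξ n * cfQ k ξ (n + 1) =
      (-1) ^ n * ∏ j ∈ Finset.range (n + 1), ξ j := by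
  induction n with
  | zero => simp [cfP, cfQ]
  | succ n ih =>
    rw [Finset.prod_range_succ, pow_succ, cfP, cfQ]
    linear_combination (-ξ (n + 1)) * ih

theorem cfQ_add_one_le_succ (hk : ∀ n, 1 ≤ k n) (hξ : ∀ n, |ξ n| ≤ 1) (n : ℕ) :
    cfQ k ξ n + 1 ≤ cfQ k ξ (n + 1) := by
  suffices h : ∀ n, 1 ≤ cfQ k ξ n ∧ cfQ k ξ n + 1 ≤ cfQ k ξ (n + 1) from (h n).2
  intro n
  induction n with
  | zero => simpa [cfQ] using hk 1
  | succ n ih =>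
    have hkn : (1 : ℤ) ≤ k (n + 2) := by exact_mod_cast hk (n + 2)
    have hξn := (abs_le.mp (hξ (n + 1))).1
    refine ⟨by linarith, ?_⟩
    rw [cfQ]
    nlinarith

theorem cfQ_pos (hk : ∀ n, 1 ≤ k n) (hξ : ∀ n, |ξ n| ≤ 1) (n : ℕ) : 0 < cfQ k ξ n := by
  induction n with
  | zero => simp [cfQ]
  | succ n ih => linarith [cfQ_add_one_le_succ hk hξ n]

theorem abs_div_sub_div_le_of_abs_det_le_one {p p' q q' : ℝ} (hq : 0 < q) (hqq' : q + 1 ≤ q')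
    (hdet : |p' * q - p * q'| ≤ 1) : |p' / q' - p / q| ≤ 1 / q - 1 / q' := by
  have hq' : 0 < q' := by linarith
  calc |p' / q' - p / q| = |p' * q - p * q'| / (q * q') := by
        rw [div_sub_div _ _ hq'.ne' hq.ne', abs_div, abs_of_pos (mul_pos hq' hq), mul_comm q' q,
          mul_comm q' p]
    _ ≤ (q' - q) / (q * q') := by gcongr; linarith
    _ = 1 / q - 1 / q' := by field_simp

theorem abs_cfP_div_cfQ_succ_sub_le (hk : ∀ n, 1 ≤ k n) (hξ : ∀ n, |ξ n| ≤ 1) (n : ℕ) :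
    |(cfP k ξ (n + 1) : ℝ) / cfQ k ξ (n + 1) - (cfP k ξ n : ℝ) / cfQ k ξ n| ≤
      1 / (cfQ k ξ n : ℝ) - 1 / cfQ k ξ (n + 1) := by
  refine abs_div_sub_div_le_of_abs_det_le_one (by exact_mod_cast cfQ_pos hk hξ n)
    (by exact_mod_cast cfQ_add_one_le_succ hk hξ n) ?_
  rw [← Int.cast_mul, ← Int.cast_mul, ← Int.cast_sub, cfP_cfQ_determinant, ← Int.cast_abs,
    abs_mul, abs_pow, abs_neg, abs_one, one_pow, one_mul, Finset.abs_prod]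
  exact_mod_cast Finset.prod_le_one (fun j _ => abs_nonneg (ξ j)) (fun j _ => hξ j)

theorem cauchySeq_cfP_div_cfQ (hk : ∀ n, 1 ≤ k n) (hξ : ∀ n, |ξ n| ≤ 1) :
    CauchySeq fun n => (cfP k ξ n : ℝ) / cfQ k ξ n := by
  set d : ℕ → ℝ := fun n => 1 / (cfQ k ξ n : ℝ) - 1 / cfQ k ξ (n + 1)
  have hd_nonneg (n : ℕ) : 0 ≤ d n :=
    (abs_nonneg _).trans (abs_cfP_div_cfQ_succ_sub_le hk hξ n)
  -- the bounds `d n` telescope, so their partial sums stay below `1 / cfQ 0 = 1`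
  have hd_sum (n : ℕ) : ∑ j ∈ Finset.range n, d j ≤ 1 := by
    rw [Finset.sum_range_sub' (fun j => 1 / (cfQ k ξ j : ℝ))]
    have hq : (0 : ℝ) < cfQ k ξ n := by exact_mod_cast cfQ_pos hk hξ n
    simp only [cfQ, Int.cast_one, div_one]
    linarith [one_div_pos.mpr hq]
  refine cauchySeq_of_dist_le_of_summable d (fun n => ?_)
    (summable_of_sum_range_le hd_nonneg hd_sum)
  rw [Real.dist_eq, abs_sub_comm]
  exact abs_cfP_div_cfQ_succ_sub_le hk hξ n

theorem cfP_succ_and_cfQ_succ (k : ℕ → ℕ) (ξ : ℕ → ℤ) (n : ℕ) :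
    cfP k ξ (n + 1) = ξ 0 * cfQ (fun j => k (j + 1)) (fun j => ξ (j + 1)) n ∧
      cfQ k ξ (n + 1) = 2 * k 1 * cfQ (fun j => k (j + 1)) (fun j => ξ (j + 1)) n +
        cfP (fun j => k (j + 1)) (fun j => ξ (j + 1)) n := by
  induction n using Nat.twoStepInduction with
  | zero => simp [cfP, cfQ]
  | one => simp only [cfP, cfQ]; constructor <;> ring
  | more n ih₀ ih₁ =>
    obtain ⟨hp₀, hq₀⟩ := ih₀
    obtain ⟨hp₁, hq₁⟩ := ih₁
    constructor
    · rw [cfP, hp₀, hp₁, cfQ]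
      ring
    · rw [cfQ, hq₀, hq₁, cfQ, cfP]
      ring

theorem cfP_div_cfQ_succ (hk : ∀ n, 1 ≤ k n) (hξ : ∀ n, |ξ n| ≤ 1) (n : ℕ) :
    (cfP k ξ (n + 1) : ℝ) / cfQ k ξ (n + 1) =
      ξ 0 / (2 * k 1 + (cfP (fun j => k (j + 1)) (fun j => ξ (j + 1)) n : ℝ) /
        cfQ (fun j => k (j + 1)) (fun j => ξ (j + 1)) n) := by
  have hq : (0 : ℝ) < cfQ (fun j => k (j + 1)) (fun j => ξ (j + 1)) n := by
    exact_mod_cast cfQ_pos (fun j => hk (j + 1)) (fun j => hξ (j + 1)) n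
  obtain ⟨hp, hq'⟩ := cfP_succ_and_cfQ_succ k ξ n
  rw [hp, hq', add_div' _ _ _ hq.ne', div_div_eq_mul_div]
  push_cast
  ring

theorem cfQ_add_cfP_mul_succ {y : ℕ → ℝ} (x : ℝ) (hy : ∀ n, y (n + 1) ≠ 0)
    (hy₁ : y 1 = 2 * k 1 + ξ 0 * x)
    (hy_succ : ∀ n, y (n + 2) = 2 * k (n + 2) + ξ (n + 1) / y (n + 1)) (n : ℕ) :
    (cfQ k ξ (n + 1) : ℝ) + cfP k ξ (n + 1) * x =
      (cfQ k ξ n + cfP k ξ n * x) * y (n + 1) := by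
  induction n with
  | zero => simp [cfP, cfQ, hy₁]
  | succ n ih =>
    have := hy n
    rw [cfQ, cfP, hy_succ]
    push_cast
    field_simp
    linear_combination (-(ξ (n + 1) : ℝ)) * ih

end Convergents

section BackwardContinuedFractions

variable {k : ℤ → ℕ} {ξ : ℤ → ℤ}

theorem backCF_eq_add_cfP_div_cfQ (hk : ∀ i, 1 ≤ k i) (hξ : ∀ i, |ξ i| ≤ 1) (s : ℕ)
    (i : ℤ) : backCF k ξ s i = 2 * k i +
      (cfP (fun n => k (i - n)) (fun n => ξ (i - 1 - n)) s : ℝ) /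
        cfQ (fun n => k (i - n)) (fun n => ξ (i - 1 - n)) s := by
  induction s generalizing i with
  | zero => simp [backCF, cfP, cfQ]
  | succ s ih =>
    have hk' : (fun n : ℕ => k (i - ↑(n + 1))) = fun n : ℕ => k (i - 1 - n) := by
      funext n; push_cast; ring_nf
    have hξ' : (fun n : ℕ => ξ (i - 1 - ↑(n + 1))) = fun n : ℕ => ξ (i - 1 - 1 - n) := by
      funext n; push_cast; ring_nf
    rw [backCF, ih (i - 1), cfP_div_cfQ_succ (fun n => hk _) (fun n => hξ _), hk', hξ']
    simp

theorem cauchySeq_backCF (hk : ∀ i, 1 ≤ k i) (hξ : ∀ i, |ξ i| ≤ 1) (i : ℤ) :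
    CauchySeq fun s => backCF k ξ s i := by
  simp_rw [backCF_eq_add_cfP_div_cfQ hk hξ]
  exact (cauchySeq_cfP_div_cfQ (fun n => hk _) (fun n => hξ _)).const_add

theorem one_le_backCF (hk : ∀ i, 1 ≤ k i) (hξ : ∀ i, |ξ i| ≤ 1) (s : ℕ) (i : ℤ) :
    1 ≤ backCF k ξ s i := by
  induction s generalizing i with
  | zero =>
    have : (1 : ℝ) ≤ k i := by exact_mod_cast hk i
    simp only [backCF]; linarith
  | succ s ih =>
    have hki : (1 : ℝ) ≤ k i := by exact_mod_cast hk i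
    have hb := ih (i - 1)
    have hξb : -1 ≤ (ξ (i - 1) : ℝ) / backCF k ξ s (i - 1) := by
      rw [le_div_iff₀ (by linarith)]
      have : (-1 : ℝ) ≤ ξ (i - 1) := by exact_mod_cast (abs_le.mp (hξ (i - 1))).1
      nlinarith
    simp only [backCF]; linarith

theorem backCF_comp_add (k : ℤ → ℕ) (ξ : ℤ → ℤ) (c : ℤ) (s : ℕ) (i : ℤ) :
    backCF (fun j => k (j + c)) (fun j => ξ (j + c)) s i = backCF k ξ s (i + c) := by
  induction s generalizing i with
  | zero => rfl
  | succ s ih => simp only [backCF, ih, sub_add_eq_add_sub]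

end BackwardContinuedFractions

section Blocks

variable (ω : DSpace)

theorem nuF_zero : nuF ω 0 = 1 := by simp [nuF]

theorem nuF_eq_nuF_sub_one_add (n : ℤ) : nuF ω n = nuF ω (n - 1) + (hF ω n + 1) := by
  rcases le_or_gt 1 n with h | h
  · rw [nuF, nuF, if_pos (by omega), if_pos (by omega),
      show n.toNat = (n - 1).toNat + 1 by omega, Finset.sum_Icc_succ_top (by omega),
      show (((n - 1).toNat + 1 : ℕ) : ℤ) = n by omega]
    ring
  rcases eq_or_lt_of_le (show n ≤ 0 by omega) with rfl | h
  · simp [nuF]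
  · rw [nuF, nuF, if_neg (by omega), if_neg (by omega),
      show (-(n - 1)).toNat = (-n).toNat + 1 by omega, Finset.sum_range_succ,
      show -(((-n).toNat : ℕ) : ℤ) = n by omega]
    ring

theorem nuF_strictMono : StrictMono (nuF ω) :=
  strictMono_int_of_lt_succ fun n => by
    have := nuF_eq_nuF_sub_one_add ω (n + 1)
    rw [add_sub_cancel_right] at this
    omega

theorem nuF_le_add_one_of_nonpos {n : ℤ} (hn : n ≤ 0) : nuF ω n ≤ n + 1 := by
  rcases hn.eq_or_lt with rfl | hn
  · simp [nuF_zero]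
  rw [nuF, if_neg hn.not_ge]
  have : ((-n).toNat : ℤ) ≤
      ∑ j ∈ Finset.range (-n).toNat, ((hF ω (-(j : ℤ)) : ℤ) + 1) := by
    simpa using Finset.card_nsmul_le_sum (Finset.range (-n).toNat)
      (fun j => ((hF ω (-(j : ℤ)) : ℤ) + 1)) 1 (fun j _ => by omega)
  omega

theorem kF_nuF_sub_one (n : ℤ) : kF ω (nuF ω n - 1) = mF ω n := by
  have hex : ∃ n', nuF ω n' - 1 = nuF ω n - 1 := ⟨n, rfl⟩
  rw [kF, dif_pos hex]
  congr 1
  exact (nuF_strictMono ω).injective (by linarith [hex.choose_spec])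

theorem xiF_nuF_sub_one (n : ℤ) : xiF ω (nuF ω n - 1) = eF ω n := by
  have hex : ∃ n', nuF ω n' - 1 = nuF ω n - 1 := ⟨n, rfl⟩
  rw [xiF, dif_pos hex]
  congr 1
  exact (nuF_strictMono ω).injective (by linarith [hex.choose_spec])

theorem kF_of_not_exists {i : ℤ} (h : ¬∃ n, nuF ω n - 1 = i) : kF ω i = 1 := by
  rw [kF, dif_neg h]

theorem xiF_of_not_exists {i : ℤ} (h : ¬∃ n, nuF ω n - 1 = i) : xiF ω i = -1 := by
  rw [xiF, dif_neg h]

theorem one_le_kF (i : ℤ) : 1 ≤ kF ω i := by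
  by_cases h : ∃ n, nuF ω n - 1 = i
  · obtain ⟨n, rfl⟩ := h
    rw [kF_nuF_sub_one]
    exact (ω.2 n).1
  · rw [kF_of_not_exists ω h]

theorem xiF_eq_one_or_eq_neg_one (i : ℤ) : xiF ω i = 1 ∨ xiF ω i = -1 := by
  by_cases h : ∃ n, nuF ω n - 1 = i
  · obtain ⟨n, rfl⟩ := h
    rw [xiF_nuF_sub_one]
    exact (ω.2 n).2.1
  · exact .inr (xiF_of_not_exists ω h)

theorem abs_xiF_le_one (i : ℤ) : |xiF ω i| ≤ 1 := by
  rcases xiF_eq_one_or_eq_neg_one ω i with h | h <;> simp [h]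

theorem not_kF_eq_one_and_xiF_eq_neg_one (n : ℤ) :
    ¬(kF ω (nuF ω n - 1) = 1 ∧ xiF ω (nuF ω n - 1) = -1) := by
  rw [kF_nuF_sub_one, xiF_nuF_sub_one]
  exact (ω.2 n).2.2

end Blocks

section Shift

variable (ω : DSpace)

theorem nuF_shiftD (n : ℤ) : nuF (shiftD ω) n = nuF ω (n + 1) - (nuF ω 1 - 1) := by
  have hh (j : ℤ) : hF (shiftD ω) j = hF ω (j + 1) := rfl
  induction n using Int.induction_on with
  | zero => simp [nuF_zero]
  | succ n ih =>
    have h₁ := nuF_eq_nuF_sub_one_add (shiftD ω) (n + 1)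
    have h₂ := nuF_eq_nuF_sub_one_add ω (n + 1 + 1)
    simp only [add_sub_cancel_right, hh] at h₁ h₂
    omega
  | pred n ih =>
    have h₁ := nuF_eq_nuF_sub_one_add (shiftD ω) (-n)
    have h₂ := nuF_eq_nuF_sub_one_add ω (-n + 1)
    simp only [add_sub_cancel_right, hh] at h₁ h₂
    rw [sub_add_cancel]
    omega

theorem exists_nuF_shiftD_iff (i : ℤ) :
    (∃ n, nuF (shiftD ω) n - 1 = i) ↔ ∃ n, nuF ω n - 1 = i + (nuF ω 1 - 1) := by
  constructor
  · rintro ⟨n, rfl⟩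
    exact ⟨n + 1, by rw [nuF_shiftD]; ring⟩
  · rintro ⟨n, hn⟩
    exact ⟨n - 1, by rw [nuF_shiftD, sub_add_cancel]; omega⟩

theorem kF_shiftD (i : ℤ) : kF (shiftD ω) i = kF ω (i + (nuF ω 1 - 1)) := by
  by_cases h : ∃ n, nuF (shiftD ω) n - 1 = i
  · obtain ⟨n, rfl⟩ := h
    rw [kF_nuF_sub_one, nuF_shiftD, show nuF ω (n + 1) - (nuF ω 1 - 1) - 1 + (nuF ω 1 - 1) =
      nuF ω (n + 1) - 1 by ring, kF_nuF_sub_one]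
    rfl
  · rw [kF_of_not_exists _ h, kF_of_not_exists _ ((exists_nuF_shiftD_iff ω i).not.mp h)]

theorem xiF_shiftD (i : ℤ) : xiF (shiftD ω) i = xiF ω (i + (nuF ω 1 - 1)) := by
  by_cases h : ∃ n, nuF (shiftD ω) n - 1 = i
  · obtain ⟨n, rfl⟩ := h
    rw [xiF_nuF_sub_one, nuF_shiftD, show nuF ω (n + 1) - (nuF ω 1 - 1) - 1 + (nuF ω 1 - 1) =
      nuF ω (n + 1) - 1 by ring, xiF_nuF_sub_one]
    rfl
  · rw [xiF_of_not_exists _ h, xiF_of_not_exists _ ((exists_nuF_shiftD_iff ω i).not.mp h)]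

theorem yF_shiftD (i : ℤ) : yF (shiftD ω) i = yF ω (i + (nuF ω 1 - 1)) := by
  simp only [yF, funext (kF_shiftD ω), funext (xiF_shiftD ω), backCF_comp_add]

end Shift

section BackwardValues

variable (ω : DSpace)

theorem tendsto_backCF_yF (i : ℤ) :
    Tendsto (fun s => backCF (kF ω) (xiF ω) s i) atTop (𝓝 (yF ω i)) :=
  (cauchySeq_backCF (one_le_kF ω) (abs_xiF_le_one ω) i).tendsto_limUnder

theorem one_le_yF (i : ℤ) : 1 ≤ yF ω i :=
  ge_of_tendsto' (tendsto_backCF_yF ω i) (one_le_backCF (one_le_kF ω) (abs_xiF_le_one ω) · i)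

theorem yF_eq_two_mul_kF_add (i : ℤ) :
    yF ω i = 2 * kF ω i + xiF ω (i - 1) / yF ω (i - 1) :=
  tendsto_nhds_unique ((tendsto_backCF_yF ω i).comp (tendsto_add_atTop_nat 1))
    ((tendsto_const_nhds.div (tendsto_backCF_yF ω (i - 1))
      (by linarith [one_le_yF ω (i - 1)])).const_add _)

theorem kF_eq_one_and_xiF_eq_neg_one_of_yF_eq_one {i : ℤ} (h : yF ω i = 1) :
    kF ω i = 1 ∧ xiF ω (i - 1) = -1 ∧ yF ω (i - 1) = 1 := by
  have hy := one_le_yF ω (i - 1)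
  have hk : (1 : ℝ) ≤ kF ω i := by exact_mod_cast one_le_kF ω i
  have hinv : 0 < 1 / yF ω (i - 1) ∧ 1 / yF ω (i - 1) ≤ 1 :=
    ⟨by positivity, (div_le_one (by linarith)).mpr hy⟩
  rw [yF_eq_two_mul_kF_add] at h
  rcases xiF_eq_one_or_eq_neg_one ω (i - 1) with hξ | hξ
  · rw [hξ, Int.cast_one] at h
    linarith
  · rw [hξ, Int.cast_neg, Int.cast_one, neg_div] at h
    have hk1 : (kF ω i : ℝ) = 1 := by linarith
    refine ⟨by exact_mod_cast hk1, hξ, ?_⟩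
    rw [hk1] at h
    field_simp at h
    linarith

theorem yF_pos (i : ℤ) : 0 < yF ω i := zero_lt_one.trans_le (one_le_yF ω i)

theorem one_lt_yF (i : ℤ) : 1 < yF ω i := by
  refine (one_le_yF ω i).lt_of_ne fun h => ?_
  -- `yF ω i = 1` forces every digit below `i` to be `(1, -1)`; the last digit of a symbol is not
  have hbelow : ∀ j ≤ i, yF ω j = 1 := by
    refine Int.leInductionDown h.symm fun j _ hj => ?_
    exact (kF_eq_one_and_xiF_eq_neg_one_of_yF_eq_one ω hj).2.2
  set n := min (i - 1) 0
  have hn : nuF ω n - 1 < i := by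
    linarith [nuF_le_add_one_of_nonpos ω (min_le_right (i - 1) 0), min_le_left (i - 1) 0]
  refine not_kF_eq_one_and_xiF_eq_neg_one ω n
    ⟨(kF_eq_one_and_xiF_eq_neg_one_of_yF_eq_one ω (hbelow _ hn.le)).1, ?_⟩
  simpa using (kF_eq_one_and_xiF_eq_neg_one_of_yF_eq_one ω (hbelow (nuF ω n) (by omega))).2.1

theorem yF_one_sub_two_mul_kF_mem_Ioc : yF ω 1 - 2 * (kF ω 1 : ℝ) ∈ Set.Ioc (-(1 / 3)) 1 := by
  have hx : yF ω 1 - 2 * (kF ω 1 : ℝ) = xiF ω 0 / yF ω 0 := by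
    rw [yF_eq_two_mul_kF_add]; simp
  have hy₀ := one_lt_yF ω 0
  rw [hx]
  rcases xiF_eq_one_or_eq_neg_one ω 0 with hξ | hξ
  · rw [hξ, Int.cast_one]
    exact ⟨by linarith [one_div_pos.mpr (yF_pos ω 0)], (div_le_one (yF_pos ω 0)).mpr hy₀.le⟩
  -- digit `0` ends `σ₀`, so `ξ₀ = -1` forces `k₀ ≥ 2`; then `y₀ ≥ 4 - 1 / y₋₁ > 3`
  have hk₀ : (2 : ℝ) ≤ kF ω 0 := by
    have hlast := not_kF_eq_one_and_xiF_eq_neg_one ω 0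
    rw [nuF_zero, sub_self] at hlast
    have hne : kF ω 0 ≠ 1 := fun h => hlast ⟨h, hξ⟩
    exact_mod_cast (show 2 ≤ kF ω 0 by have := one_le_kF ω 0; omega)
  have hy₀3 : 3 < yF ω 0 := by
    have hy := one_lt_yF ω (-1)
    have hξ' : (-1 : ℝ) ≤ xiF ω (-1) := by
      exact_mod_cast (abs_le.mp (abs_xiF_le_one ω (-1))).1
    have : -1 < (xiF ω (-1) : ℝ) / yF ω (-1) := by
      rw [lt_div_iff₀ (by linarith)]
      linarith
    rw [yF_eq_two_mul_kF_add, show (0 : ℤ) - 1 = -1 by norm_num]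
    linarith
  rw [hξ, Int.cast_neg, Int.cast_one, neg_div]
  constructor
  · rw [neg_lt_neg_iff, div_lt_iff₀ (by linarith)]; linarith
  · linarith [one_div_pos.mpr (yF_pos ω 0)]

end BackwardValues

section BirkhoffSums

variable (ω : DSpace)

theorem qPlus_add_pPlus_mul_succ (n : ℕ) :
    (qPlus ω (n + 1) : ℝ) + pPlus ω (n + 1) * (yF ω 1 - 2 * kF ω 1) =
      (qPlus ω n + pPlus ω n * (yF ω 1 - 2 * kF ω 1)) * yF ω (n + 1 : ℕ) := by
  refine cfQ_add_cfP_mul_succ (y := fun n => yF ω n) _ (fun n => (yF_pos ω _).ne')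
    (by simp [kPlus, xiPlus]) (fun n => ?_) n
  simp only [kPlus, xiPlus, if_neg n.succ_ne_zero]
  rw [yF_eq_two_mul_kF_add]
  push_cast
  ring_nf

theorem qPlus_add_pPlus_mul_pos (n : ℕ) :
    0 < (qPlus ω n : ℝ) + pPlus ω n * (yF ω 1 - 2 * kF ω 1) := by
  induction n with
  | zero => simp [qPlus, pPlus, cfQ, cfP]
  | succ n ih =>
    rw [qPlus_add_pPlus_mul_succ]
    exact mul_pos ih (yF_pos ω _)

theorem sum_Ioc_log_yF (N : ℕ) :
    ∑ t ∈ Finset.Ioc (0 : ℤ) N, Real.log (yF ω t) =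
      Real.log ((qPlus ω N : ℝ) + pPlus ω N * (yF ω 1 - 2 * kF ω 1)) := by
  induction N with
  | zero => simp [qPlus, pPlus, cfQ, cfP]
  | succ N ih =>
    rw [Nat.cast_succ, ← Finset.insert_Ioc_right_eq_Ioc_add_one (Nat.cast_nonneg N),
      Finset.sum_insert (by simp), ih, qPlus_add_pPlus_mul_succ,
      Real.log_mul (qPlus_add_pPlus_mul_pos ω N).ne' (yF_pos ω _).ne']
    push_cast
    ring

theorem birkhoffPsi_succ (n : ℕ) :
    birkhoffPsi ω (n + 1) = psiF ω + birkhoffPsi (shiftD ω) n := by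
  simp only [birkhoffPsi, Finset.sum_range_succ', Function.iterate_succ_apply,
    Function.iterate_zero_apply]
  ring

theorem psiF_eq_sum_Ioc : psiF ω = ∑ t ∈ Finset.Ioc 1 (nuF ω 1), Real.log (yF ω t) := by
  rw [psiF]
  congr 1
  ext t
  simp only [Finset.mem_Icc, Finset.mem_Ioc]
  omega

theorem birkhoffPsi_eq_sum_Ioc (n : ℕ) :
    birkhoffPsi ω n = ∑ t ∈ Finset.Ioc 1 (nuF ω n), Real.log (yF ω t) := by
  induction n generalizing ω with
  | zero => simp [birkhoffPsi, nuF_zero]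
  | succ n ih =>
    have h₁ : 1 ≤ nuF ω 1 := by linarith [nuF_zero ω, nuF_strictMono ω zero_lt_one]
    have h₂ : nuF ω 1 ≤ nuF ω (n + 1 : ℕ) :=
      (nuF_strictMono ω).monotone (by push_cast; omega)
    have hshift : birkhoffPsi (shiftD ω) n =
        ∑ t ∈ Finset.Ioc (nuF ω 1) (nuF ω (n + 1 : ℕ)), Real.log (yF ω t) := by
      rw [ih, ← sub_add_cancel (nuF ω 1) (nuF ω 1 - 1),
        ← sub_add_cancel (nuF ω (n + 1 : ℕ)) (nuF ω 1 - 1), ← Finset.map_add_right_Ioc,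
        Finset.sum_map]
      simp only [addRightEmbedding_apply, yF_shiftD, nuF_shiftD]
      push_cast
      ring_nf
    rw [birkhoffPsi_succ, hshift, psiF_eq_sum_Ioc,
      ← Finset.sum_union (Finset.Ioc_disjoint_Ioc_of_le le_rfl),
      Finset.Ioc_union_Ioc_eq_Ioc h₁ h₂]

end BirkhoffSums

/-- Closed form for the Birkhoff sums of the roof function:
`S_n(ψ)(ω̂) = log((q_{ν_n} + p_{ν_n}·x)/(2k₁ + x))`, where `x = y₁(ω̂) − 2k₁(ω̂)`
is the backward value of `ω̂`, which lies in `(−1/3, 1]`. -/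
theorem birkhoff_sum_closed_form :
    ∀ ω : DSpace, ∀ n : ℕ, 1 ≤ n →
      yF ω 1 - 2 * (kF ω 1 : ℝ) ∈ Set.Ioc (-(1/3) : ℝ) 1 ∧
      birkhoffPsi ω n =
        Real.log (((qPlus ω (nuF ω n).toNat : ℝ) +
            (pPlus ω (nuF ω n).toNat : ℝ) * (yF ω 1 - 2 * (kF ω 1 : ℝ))) /
          (2 * (kF ω 1 : ℝ) + (yF ω 1 - 2 * (kF ω 1 : ℝ)))) := by
  intro ω n _
  refine ⟨yF_one_sub_two_mul_kF_mem_Ioc ω, ?_⟩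
  have hν : 1 ≤ nuF ω n := nuF_zero ω ▸ (nuF_strictMono ω).monotone (Nat.cast_nonneg n)
  have hsplit : Finset.Ioc 0 (nuF ω n) = insert 1 (Finset.Ioc 1 (nuF ω n)) := by
    ext t
    simp only [Finset.mem_Ioc, Finset.mem_insert]
    omega
  rw [add_sub_cancel, Real.log_div (qPlus_add_pPlus_mul_pos ω _).ne' (yF_pos ω 1).ne',
    ← sum_Ioc_log_yF, Int.toNat_of_nonneg (by omega), hsplit, Finset.sum_insert (by simp),
    birkhoffPsi_eq_sum_Ioc]
  ring
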